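/- arXiv:2508.00389 — 2 statements merged into one kernel-verified Lean document; each statement's English description precedes it below -/
import Mathlib

section
/- Let f_1, …, f_p be nonzero elements of ℓ²(Λ, M_n) and let b₀ > 0 be such that ‖F(f_j)(x)‖_{M_n} ≤ b₀ for almost every x ∈ Ω and every j ∈ {1,…,p}. Then the system {D_{2Nλ} f_j : λ ∈ Λ, 1 ≤ j ≤ p} is a matrix-valued discrete Bessel sequence of non-uniform shifts with Bessel bound 2^{p−1} b₀² n², i.e. ∑_{j=1}^p ∑_{λ∈Λ} |⟨f, D_{2Nλ} f_j⟩|² ≤ 2^{p−1} b₀² n² ‖f‖² for every f ∈ ℓ²(Λ, M_n). -/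
open MeasureTheory Complex Real Classical

noncomputable section

/-- The non-uniform translation set `Λ = {0, r/N} + 2ℤ`. -/
def LambdaSet (N r : ℕ) : Set ℝ :=
  {x | ∃ z : ℤ, x = 2 * (z : ℝ) ∨ x = (r : ℝ) / (N : ℝ) + 2 * (z : ℝ)}

/-- The spectral set `Ω = [0, 1/2) ∪ [N/2, (N+1)/2)`. -/
def OmegaSet (N : ℕ) : Set ℝ :=
  Set.Ico (0 : ℝ) (1 / 2) ∪ Set.Ico ((N : ℝ) / 2) (((N : ℝ) + 1) / 2)

/-- `n × n` complex matrices. -/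
abbrev Mat (n : ℕ) := Matrix (Fin n) (Fin n) ℂ

/-- Frobenius norm of a complex matrix. -/
def frobNorm {n : ℕ} (A : Mat n) : ℝ :=
  Real.sqrt (∑ m, ∑ k, ‖A m k‖ ^ 2)

/-- Membership in `ℓ²(Λ, M_n)`. -/
def MemL2 {n : ℕ} (N r : ℕ) (f : LambdaSet N r → Mat n) : Prop :=
  Summable fun lam : LambdaSet N r => ∑ m, ∑ k, ‖f lam m k‖ ^ 2

/-- Inner product on `ℓ²(Λ, M_n)`: `⟨f, g⟩ = ∑_λ tr (f(λ) g(λ)*)`. -/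
def l2inner {n : ℕ} (N r : ℕ) (f g : LambdaSet N r → Mat n) : ℂ :=
  ∑' lam : LambdaSet N r, ∑ m, ∑ k, f lam m k * (starRingEnd ℂ) (g lam m k)

/-- Squared norm on `ℓ²(Λ, M_n)`. -/
def l2normSq {n : ℕ} (N r : ℕ) (f : LambdaSet N r → Mat n) : ℝ :=
  ∑' lam : LambdaSet N r, ∑ m, ∑ k, ‖f lam m k‖ ^ 2

/-- The displacement (non-uniform shift) operator `D_{2Nλ} f (λ') = f (λ' - 2Nλ)`. -/
def shift {n : ℕ} (N r : ℕ) (lam : LambdaSet N r) (f : LambdaSet N r → Mat n) :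
    LambdaSet N r → Mat n :=
  fun lam' =>
    if h : ((lam' : ℝ) - 2 * (N : ℝ) * (lam : ℝ)) ∈ LambdaSet N r then f ⟨_, h⟩ else 0

/-- `F : ℝ → M_n` represents the Fourier transform of `f ∈ ℓ²(Λ, M_n)`:  each entry of `F`
is in `L²(Ω)` and the inversion formula `f(λ)_{m,k} = ∫_Ω F_{m,k}(x) e^{-2πiλx} dx` holds.
Since `{e^{2πiλ·}}_{λ ∈ Λ}` is an orthonormal basis of `L²(Ω)`, this determines `F`
uniquely up to a.e. equality. -/
def IsFT {n : ℕ} (N r : ℕ) (f : LambdaSet N r → Mat n) (F : ℝ → Mat n) : Prop :=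
  (∀ m k, MemLp (fun x => F x m k) 2 (volume.restrict (OmegaSet N))) ∧
  ∀ (lam : LambdaSet N r) (m k : Fin n),
    f lam m k =
      ∫ x in OmegaSet N, F x m k * Complex.exp (((-(2 * π * (lam : ℝ) * x) : ℝ) : ℂ) * Complex.I)

/-- The quantity `∑_{j=1}^p ∑_{λ ∈ Λ} |⟨f, D_{2Nλ} f_j⟩|²`. -/
def besselSum {n : ℕ} (N r p : ℕ) (fs : Fin p → (LambdaSet N r → Mat n))
    (f : LambdaSet N r → Mat n) : ℝ :=
  ∑ j, ∑' lam : LambdaSet N r, ‖l2inner N r f (shift N r lam (fs j))‖ ^ 2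

end

/-!
For each entry `(m, k)` put `u_{mk} = ∑_λ f(λ)_{mk} e_λ ∈ L²(Ω)`, where `e_t(x) = e^{2πitx}`;
the `e_λ`, `λ ∈ Λ`, are orthonormal on `Ω = [0, 1/2) ∪ (N/2 + [0, 1/2))` because `r` is odd.
The inversion formula for `f_j` turns `⟨f, D_{2Nλ} f_j⟩` into `⟨e_{2Nλ}, H_j⟩` with
`H_j = ∑_{m,k} conj (F(f_j)_{mk}) u_{mk}`. As `λ ↦ 2Nλ` maps `Λ` injectively into `Λ`, Bessel's
inequality bounds the sum over `λ` by `‖H_j‖² ≤ n² b₀² ∑_{m,k} ‖u_{mk}‖² = n² b₀² ‖f‖²`, and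
summing over `j` gives `p b₀² n² ‖f‖² ≤ 2^{p-1} b₀² n² ‖f‖²`.
-/

open scoped InnerProductSpace ComplexConjugate ENNReal

theorem norm_sum_sq_le_card_mul_sum_sq {ι E : Type*} [Fintype ι] [SeminormedAddCommGroup E]
    {v : ι → E} {c : ι → ℝ} (h : ∀ i, ‖v i‖ ≤ c i) :
    ‖∑ i, v i‖ ^ 2 ≤ Fintype.card ι * ∑ i, c i ^ 2 :=
  calc ‖∑ i, v i‖ ^ 2 ≤ (∑ i, c i) ^ 2 :=
        pow_le_pow_left₀ (norm_nonneg _)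
          ((norm_sum_le _ _).trans (Finset.sum_le_sum fun i _ => h i)) 2
    _ ≤ Fintype.card ι * ∑ i, c i ^ 2 := sq_sum_le_card_mul_sum_sq

section Hilbert

variable {ι 𝕜 E : Type*} [RCLike 𝕜] [NormedAddCommGroup E] [InnerProductSpace 𝕜 E]

theorem Orthonormal.exists_hasSum_smul [CompleteSpace E] {e : ι → E} (he : Orthonormal 𝕜 e)
    {a : ι → 𝕜} (ha : Summable fun i => ‖a i‖ ^ 2) :
    ∃ u, HasSum (fun i => a i • e i) u ∧ ‖u‖ ^ 2 = ∑' i, ‖a i‖ ^ 2 := by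
  have hs : Summable fun i => a i • e i :=
    (he.orthogonalFamily.summable_iff_norm_sq_summable a).2 ha
  refine ⟨_, hs.hasSum, tendsto_nhds_unique (hs.hasSum.norm.pow 2) ?_⟩
  have hpartial := funext (he.orthogonalFamily.norm_sum a)
  simp only [LinearIsometry.toSpanSingleton_apply] at hpartial
  rw [hpartial]
  exact ha.hasSum

end Hilbert

section L2

variable {α 𝕜 : Type*} [RCLike 𝕜] [MeasurableSpace α] {μ : Measure α}

theorem MeasureTheory.L2.inner_toLp_toLp {f g : α → 𝕜} (hf : MemLp f 2 μ) (hg : MemLp g 2 μ) :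
    ⟪hf.toLp f, hg.toLp g⟫_𝕜 = ∫ x, conj (f x) * g x ∂μ := by
  rw [L2.inner_def]
  refine integral_congr_ae ?_
  filter_upwards [hf.coeFn_toLp, hg.coeFn_toLp] with x hfx hgx
  rw [hfx, hgx, RCLike.inner_apply']

theorem MeasureTheory.L2.inner_toLp_mul_left {φ v : α → 𝕜} (w : Lp 𝕜 2 μ) (hv : MemLp v 2 μ)
    (hφv : MemLp (fun x => φ x * v x) 2 μ) (hφw : MemLp (fun x => conj (φ x) * w x) 2 μ) :
    ⟪hφv.toLp _, w⟫_𝕜 = ⟪hv.toLp v, hφw.toLp _⟫_𝕜 := by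
  conv_lhs => rw [← Lp.toLp_coeFn w (Lp.memLp w)]
  rw [L2.inner_toLp_toLp, L2.inner_toLp_toLp]
  congr 1 with x
  rw [map_mul]
  ring

theorem MeasureTheory.MemLp.mul_of_ae_norm_le {φ g : α → 𝕜} {C : ℝ} {p : ℝ≥0∞}
    (hφ : AEStronglyMeasurable φ μ) (hφC : ∀ᵐ x ∂μ, ‖φ x‖ ≤ C) (hg : MemLp g p μ) :
    MemLp (fun x => φ x * g x) p μ :=
  hg.of_le_mul (hφ.mul hg.aestronglyMeasurable) <| by
    filter_upwards [hφC] with x hx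
    rw [norm_mul]
    exact mul_le_mul_of_nonneg_right hx (norm_nonneg _)

end L2

noncomputable def fourierExp (t x : ℝ) : ℂ := Complex.exp (↑(2 * π * t * x) * I)

theorem norm_fourierExp (t x : ℝ) : ‖fourierExp t x‖ = 1 :=
  Complex.norm_exp_ofReal_mul_I _

theorem continuous_fourierExp (t : ℝ) : Continuous (fourierExp t) := by
  unfold fourierExp
  fun_prop

theorem fourierExp_eq_exp (t x : ℝ) : fourierExp t x = Complex.exp ((2 * π * t * I) * x) := by
  rw [fourierExp]
  push_cast
  ring_nf

theorem fourierExp_zero_left (x : ℝ) : fourierExp 0 x = 1 := by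
  simp [fourierExp]

theorem fourierExp_zero_right (t : ℝ) : fourierExp t 0 = 1 := by
  simp [fourierExp]

theorem fourierExp_add_right (t x y : ℝ) :
    fourierExp t (x + y) = fourierExp t x * fourierExp t y := by
  simp only [fourierExp_eq_exp, ← Complex.exp_add]
  push_cast
  ring_nf

theorem conj_fourierExp (t x : ℝ) : conj (fourierExp t x) = fourierExp (-t) x := by
  simp only [fourierExp, ← Complex.exp_conj, map_mul, Complex.conj_ofReal, Complex.conj_I]
  push_cast
  ring_nf

theorem conj_fourierExp_mul (s t x : ℝ) :
    conj (fourierExp s x) * fourierExp t x = fourierExp (t - s) x := by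
  simp only [fourierExp, ← Complex.exp_conj, ← Complex.exp_add, map_mul, Complex.conj_ofReal,
    Complex.conj_I]
  push_cast
  ring_nf

theorem fourierExp_neg_left (t x : ℝ) :
    fourierExp (-t) x = Complex.exp (↑(-(2 * π * t * x)) * I) := by
  rw [fourierExp]
  push_cast
  ring_nf

theorem integral_fourierExp_Ico {t : ℝ} (ht : t ≠ 0) {a b : ℝ} (hab : a ≤ b) :
    ∫ x in Set.Ico a b, fourierExp t x = (fourierExp t b - fourierExp t a) / (2 * π * t * I) := by
  have hc : (2 * π * t * I : ℂ) ≠ 0 := by simp [Real.pi_ne_zero, ht]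
  rw [integral_Ico_eq_integral_Ioc, ← intervalIntegral.integral_of_le hab]
  simp only [fourierExp_eq_exp]
  exact integral_exp_mul_complex hc

theorem fourierExp_two_mul_intCast_one_half (k : ℤ) : fourierExp (2 * k) (1 / 2) = 1 := by
  rw [fourierExp_eq_exp, ← Complex.exp_int_mul_two_pi_mul_I k]
  push_cast
  ring_nf

theorem fourierExp_div_two_of_odd {t : ℝ} {N : ℕ} {k : ℤ} (hk : Odd k) (htN : t * N = k) :
    fourierExp t (N / 2) = -1 := by
  obtain ⟨j, rfl⟩ := hk
  have htN' : (t : ℂ) * N = 2 * j + 1 := by exact_mod_cast htN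
  have : fourierExp t (N / 2) = Complex.exp (j * (2 * π * I) + π * I) := by
    rw [fourierExp]
    congr 1
    push_cast
    linear_combination (π * I) * htN'
  rw [this, Complex.exp_add, Complex.exp_int_mul_two_pi_mul_I, Complex.exp_pi_mul_I, one_mul]

section Omega

variable {N : ℕ}

instance (N : ℕ) : IsFiniteMeasure (volume.restrict (OmegaSet N)) :=
  isFiniteMeasure_restrict.2
    ((Metric.isBounded_Ico _ _).union (Metric.isBounded_Ico _ _)).measure_lt_top.ne

theorem disjoint_omegaSet_parts (hN : N ≠ 0) :
    Disjoint (Set.Ico (0 : ℝ) (1 / 2)) (Set.Ico ((N : ℝ) / 2) (((N : ℝ) + 1) / 2)) := by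
  have : (1 : ℝ) ≤ N := by exact_mod_cast Nat.one_le_iff_ne_zero.2 hN
  exact Set.disjoint_left.2 fun x hx hx' => by linarith [hx.2, hx'.1]

theorem volume_omegaSet (hN : N ≠ 0) : volume (OmegaSet N) = 1 := by
  rw [OmegaSet, measure_union (disjoint_omegaSet_parts hN) measurableSet_Ico, Real.volume_Ico,
    Real.volume_Ico, ← ENNReal.ofReal_add (by norm_num) (by linarith),
    show (1 / 2 - 0 : ℝ) + ((N + 1) / 2 - N / 2) = 1 by ring, ENNReal.ofReal_one]

/-- `Ω` is `[0, 1/2)` together with its translate by `N/2`. -/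
theorem integral_fourierExp_omegaSet (hN : N ≠ 0) {t : ℝ} (ht : t ≠ 0) :
    ∫ x in OmegaSet N, fourierExp t x =
      (1 + fourierExp t (N / 2)) * (fourierExp t (1 / 2) - 1) / (2 * π * t * I) := by
  have hint : ∀ a b : ℝ, IntegrableOn (fourierExp t) (Set.Ico a b) :=
    fun a b => (continuous_fourierExp t).integrableOn_Icc.mono_set Set.Ico_subset_Icc_self
  rw [OmegaSet, setIntegral_union (disjoint_omegaSet_parts hN) measurableSet_Ico (hint _ _)
    (hint _ _), integral_fourierExp_Ico ht (by norm_num), integral_fourierExp_Ico ht (by linarith),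
    show ((N : ℝ) + 1) / 2 = N / 2 + 1 / 2 by ring, fourierExp_add_right, fourierExp_zero_right]
  ring

theorem integral_fourierExp_omegaSet_eq_zero (hN : N ≠ 0) {t : ℝ} (ht : t ≠ 0)
    (h : (∃ k : ℤ, t = 2 * k) ∨ ∃ k : ℤ, Odd k ∧ t * N = k) :
    ∫ x in OmegaSet N, fourierExp t x = 0 := by
  rw [integral_fourierExp_omegaSet hN ht]
  rcases h with ⟨k, rfl⟩ | ⟨k, hk, htN⟩
  · rw [fourierExp_two_mul_intCast_one_half, sub_self, mul_zero, zero_div]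
  · rw [fourierExp_div_two_of_odd hk htN, add_neg_cancel, zero_mul, zero_div]

end Omega

namespace LambdaSet

variable {N r : ℕ}

theorem exists_two_mul_eq (hN : N ≠ 0) (lam : LambdaSet N r) :
    ∃ k : ℤ, 2 * (N : ℝ) * lam = 2 * k := by
  obtain ⟨z, hz | hz⟩ := lam.2
  · exact ⟨2 * N * z, by rw [hz]; push_cast; ring⟩
  · exact ⟨r + 2 * N * z, by rw [hz]; push_cast; field_simp⟩

theorem two_mul_mem (hN : N ≠ 0) (lam : LambdaSet N r) :
    2 * (N : ℝ) * lam ∈ LambdaSet N r :=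
  (exists_two_mul_eq hN lam).imp fun _ => Or.inl

theorem sub_two_mul_mem (hN : N ≠ 0) (lam lam' : LambdaSet N r) :
    (lam' : ℝ) - 2 * N * lam ∈ LambdaSet N r := by
  obtain ⟨k, hk⟩ := exists_two_mul_eq hN lam
  obtain ⟨z, hz | hz⟩ := lam'.2
  · exact ⟨z - k, Or.inl (by rw [hz, hk]; push_cast; ring)⟩
  · exact ⟨z - k, Or.inr (by rw [hz, hk]; push_cast; ring)⟩

theorem two_mul_injective (hN : N ≠ 0) :
    Function.Injective fun lam : LambdaSet N r => (⟨_, two_mul_mem hN lam⟩ : LambdaSet N r) :=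
  fun _ _ h => Subtype.ext <| mul_left_cancel₀ (by positivity) (congrArg Subtype.val h)

/-- In the mixed cases `λ - λ' ∈ ±r/N + 2ℤ`, and `N (±r/N + 2k) = ±r + 2kN` is odd. -/
theorem exists_sub_eq_two_mul_or_odd (hN : N ≠ 0) (hr : Odd r) (lam lam' : LambdaSet N r) :
    (∃ k : ℤ, (lam : ℝ) - lam' = 2 * k) ∨ ∃ k : ℤ, Odd k ∧ ((lam : ℝ) - lam') * N = k := by
  have hNR : (N : ℝ) ≠ 0 := by exact_mod_cast hN
  have hr' : Odd (r : ℤ) := by exact_mod_cast hr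
  obtain ⟨z, hz | hz⟩ := lam.2 <;> obtain ⟨w, hw | hw⟩ := lam'.2 <;> rw [hz, hw]
  · exact Or.inl ⟨z - w, by push_cast; ring⟩
  · refine Or.inr ⟨-r + 2 * (z - w) * N, hr'.neg.add_even (by simp), ?_⟩
    push_cast
    field_simp
    ring
  · refine Or.inr ⟨r + 2 * (z - w) * N, hr'.add_even (by simp), ?_⟩
    push_cast
    field_simp
    ring
  · exact Or.inl ⟨z - w, by push_cast; ring⟩

end LambdaSet

theorem memLp_fourierExp {μ : Measure ℝ} [IsFiniteMeasure μ] (p : ℝ≥0∞) (t : ℝ) :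
    MemLp (fourierExp t) p μ :=
  MemLp.of_bound (continuous_fourierExp t).aestronglyMeasurable 1
    (ae_of_all _ fun x => (norm_fourierExp t x).le)

theorem MeasureTheory.MemLp.mul_fourierExp {μ : Measure ℝ} {p : ℝ≥0∞} {φ : ℝ → ℂ}
    (hφ : MemLp φ p μ) (t : ℝ) : MemLp (fun x => φ x * fourierExp t x) p μ :=
  hφ.of_le_mul (hφ.aestronglyMeasurable.mul (continuous_fourierExp t).aestronglyMeasurable)
    (c := 1) (ae_of_all _ fun x => by rw [norm_mul, norm_fourierExp, mul_one, one_mul])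

noncomputable def fourierExpLp (N : ℕ) (t : ℝ) : Lp ℂ 2 (volume.restrict (OmegaSet N)) :=
  (memLp_fourierExp 2 t).toLp _

theorem inner_fourierExpLp (N : ℕ) (s t : ℝ) :
    ⟪fourierExpLp N s, fourierExpLp N t⟫_ℂ = ∫ x in OmegaSet N, fourierExp (t - s) x := by
  simp only [fourierExpLp, L2.inner_toLp_toLp, conj_fourierExp_mul]

theorem orthonormal_fourierExpLp {N r : ℕ} (hN : N ≠ 0) (hr : Odd r) :
    Orthonormal ℂ fun lam : LambdaSet N r => fourierExpLp N lam := by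
  rw [orthonormal_iff_ite]
  intro lam lam'
  rw [inner_fourierExpLp]
  split_ifs with h
  · simp [h, fourierExp_zero_left, measureReal_def, volume_omegaSet hN]
  · refine integral_fourierExp_omegaSet_eq_zero hN (sub_ne_zero.2 fun h' => h ?_)
      (LambdaSet.exists_sub_eq_two_mul_or_odd hN hr lam' lam)
    exact Subtype.ext h'.symm

theorem Matrix.sq_norm_apply_le_sum {ι κ α : Type*} [Fintype ι] [Fintype κ] [Norm α]
    (A : Matrix ι κ α) (i : ι) (j : κ) : ‖A i j‖ ^ 2 ≤ ∑ i', ∑ j', ‖A i' j'‖ ^ 2 :=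
  calc ‖A i j‖ ^ 2 ≤ ∑ j', ‖A i j'‖ ^ 2 :=
        Finset.single_le_sum (f := fun j' => ‖A i j'‖ ^ 2) (fun _ _ => sq_nonneg _)
          (Finset.mem_univ j)
    _ ≤ ∑ i', ∑ j', ‖A i' j'‖ ^ 2 :=
        Finset.single_le_sum (f := fun i' => ∑ j', ‖A i' j'‖ ^ 2)
          (fun _ _ => Finset.sum_nonneg fun _ _ => sq_nonneg _) (Finset.mem_univ i)

theorem norm_apply_le_frobNorm {n : ℕ} (A : Mat n) (m k : Fin n) : ‖A m k‖ ≤ frobNorm A :=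
  Real.le_sqrt_of_sq_le (A.sq_norm_apply_le_sum m k)

theorem l2normSq_nonneg {N r n : ℕ} (f : LambdaSet N r → Mat n) : 0 ≤ l2normSq N r f :=
  tsum_nonneg fun _ => by positivity

namespace MemL2

variable {N r n : ℕ} {f : LambdaSet N r → Mat n}

theorem summable_entry (hf : MemL2 N r f) (m k : Fin n) :
    Summable fun lam => ‖f lam m k‖ ^ 2 :=
  hf.of_nonneg_of_le (fun _ => sq_nonneg _) fun lam => (f lam).sq_norm_apply_le_sum m k

theorem l2normSq_eq (hf : MemL2 N r f) :
    l2normSq N r f = ∑ m, ∑ k, ∑' lam, ‖f lam m k‖ ^ 2 :=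
  (hasSum_sum fun m _ => hasSum_sum fun k _ => (hf.summable_entry m k).hasSum).tsum_eq

end MemL2

section Shift

variable {N r n : ℕ} {g : LambdaSet N r → Mat n} {G : ℝ → Mat n}

theorem shift_apply (hN : N ≠ 0) (lam lam' : LambdaSet N r) :
    shift N r lam g lam' = g ⟨_, LambdaSet.sub_two_mul_mem hN lam lam'⟩ :=
  dif_pos _

/-- `conj e_T · e_{λ'} = e_{λ' - T}`, so this is the inversion formula for `g` at `λ' - T`. -/
theorem IsFT.conj_shift_apply (hG : IsFT N r g G) (hN : N ≠ 0) (lam lam' : LambdaSet N r)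
    (m k : Fin n) :
    conj (shift N r lam g lam' m k) =
      ⟪((hG.1 m k).mul_fourierExp (2 * N * lam)).toLp _, fourierExpLp N lam'⟫_ℂ := by
  rw [fourierExpLp, L2.inner_toLp_toLp, shift_apply hN, hG.2, ← integral_conj]
  congr 1 with x
  rw [← fourierExp_neg_left, map_mul, map_mul, mul_assoc (conj (G x m k)), conj_fourierExp_mul,
    conj_fourierExp, neg_neg]

theorem IsFT.hasSum_mul_conj_shift_apply (hG : IsFT N r g G) (hN : N ≠ 0) (lam : LambdaSet N r)
    (m k : Fin n) {a : LambdaSet N r → ℂ} {u : Lp ℂ 2 (volume.restrict (OmegaSet N))}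
    (hu : HasSum (fun lam' => a lam' • fourierExpLp N lam') u)
    (hGu : MemLp (fun x => conj (G x m k) * u x) 2 (volume.restrict (OmegaSet N))) :
    HasSum (fun lam' => a lam' * conj (shift N r lam g lam' m k))
      ⟪fourierExpLp N (2 * N * lam), hGu.toLp _⟫_ℂ := by
  rw [fourierExpLp, ← L2.inner_toLp_mul_left u _ ((hG.1 m k).mul_fourierExp _)]
  simpa only [innerSL_apply_apply, inner_smul_right, hG.conj_shift_apply hN] using
    (innerSL ℂ (((hG.1 m k).mul_fourierExp (2 * N * lam)).toLp _)).hasSum hu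

theorem IsFT.l2inner_shift_eq_inner (hG : IsFT N r g G) (hN : N ≠ 0) {f : LambdaSet N r → Mat n}
    {u : Fin n → Fin n → Lp ℂ 2 (volume.restrict (OmegaSet N))}
    (hu : ∀ m k, HasSum (fun lam' => f lam' m k • fourierExpLp N lam') (u m k))
    (hGu : ∀ m k, MemLp (fun x => conj (G x m k) * u m k x) 2 (volume.restrict (OmegaSet N)))
    (lam : LambdaSet N r) :
    l2inner N r f (shift N r lam g) =
      ⟪fourierExpLp N (2 * N * lam), ∑ m, ∑ k, (hGu m k).toLp _⟫_ℂ := by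
  simp only [inner_sum]
  exact (hasSum_sum fun m _ => hasSum_sum fun k _ =>
    hG.hasSum_mul_conj_shift_apply hN lam m k (hu m k) (hGu m k)).tsum_eq

end Shift

theorem IsFT.tsum_norm_l2inner_shift_sq_le {N r n : ℕ} (hN : N ≠ 0) (hr : Odd r)
    {g : LambdaSet N r → Mat n} {G : ℝ → Mat n} (hG : IsFT N r g G) {b₀ : ℝ}
    (hGb : ∀ᵐ x ∂(volume.restrict (OmegaSet N)), frobNorm (G x) ≤ b₀)
    {f : LambdaSet N r → Mat n} (hf : MemL2 N r f) :
    ∑' lam, ‖l2inner N r f (shift N r lam g)‖ ^ 2 ≤ b₀ ^ 2 * n ^ 2 * l2normSq N r f := by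
  have he := orthonormal_fourierExpLp hN hr
  choose u hu hu_norm using fun m k => he.exists_hasSum_smul (hf.summable_entry m k)
  have hGb' : ∀ m k, ∀ᵐ x ∂(volume.restrict (OmegaSet N)), ‖conj (G x m k)‖ ≤ b₀ := fun m k => by
    filter_upwards [hGb] with x hx
    exact (RCLike.norm_conj _).trans_le ((norm_apply_le_frobNorm _ m k).trans hx)
  have hGu : ∀ m k, MemLp (fun x => conj (G x m k) * u m k x) 2 (volume.restrict (OmegaSet N)) :=
    fun m k => (Lp.memLp _).mul_of_ae_norm_le
      (hG.1 m k).aestronglyMeasurable.star (hGb' m k)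
  have hGu_norm : ∀ m k, ‖(hGu m k).toLp _‖ ≤ b₀ * ‖u m k‖ := fun m k =>
    Lp.norm_le_mul_norm_of_ae_le_mul <| by
      filter_upwards [(hGu m k).coeFn_toLp, hGb' m k] with x hx hb
      rw [hx, norm_mul]
      exact mul_le_mul_of_nonneg_right hb (norm_nonneg _)
  calc ∑' lam, ‖l2inner N r f (shift N r lam g)‖ ^ 2
      = ∑' lam : LambdaSet N r,
          ‖⟪fourierExpLp N (2 * N * lam), ∑ m, ∑ k, (hGu m k).toLp _⟫_ℂ‖ ^ 2 := by
        simp only [hG.l2inner_shift_eq_inner hN hu hGu]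
    _ ≤ ‖∑ m, ∑ k, (hGu m k).toLp _‖ ^ 2 :=
        (he.comp _ (LambdaSet.two_mul_injective hN)).tsum_inner_products_le _
    _ ≤ Fintype.card (Fin n × Fin n) * ∑ mk : Fin n × Fin n, (b₀ * ‖u mk.1 mk.2‖) ^ 2 := by
        rw [← Fintype.sum_prod_type']
        exact norm_sum_sq_le_card_mul_sum_sq fun mk => hGu_norm mk.1 mk.2
    _ = b₀ ^ 2 * n ^ 2 * l2normSq N r f := by
        rw [Fintype.sum_prod_type' fun m k => (b₀ * ‖u m k‖) ^ 2, hf.l2normSq_eq,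
          Fintype.card_prod, Fintype.card_fin]
        simp only [mul_pow, ← Finset.mul_sum, hu_norm]
        push_cast
        ring

theorem bessel_of_fourier_bounded_general
    (N r n p : ℕ) (hN : 1 ≤ N) (hr_odd : Odd r)
    (fs : Fin p → (LambdaSet N r → Mat n))
    (b₀ : ℝ)
    (Fs : Fin p → ℝ → Mat n) (hFT : ∀ j, IsFT N r (fs j) (Fs j))
    (hbound : ∀ j, ∀ᵐ x ∂(volume.restrict (OmegaSet N)), frobNorm (Fs j x) ≤ b₀) :
    ∀ f : LambdaSet N r → Mat n, MemL2 N r f →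
      besselSum N r p fs f ≤ 2 ^ (p - 1) * b₀ ^ 2 * (n : ℝ) ^ 2 * l2normSq N r f := by
  intro f hf
  have hp : p ≤ 2 ^ (p - 1) := by
    have := Nat.lt_two_pow_self (n := p - 1)
    omega
  calc besselSum N r p fs f
      ≤ ∑ _j : Fin p, b₀ ^ 2 * n ^ 2 * l2normSq N r f := Finset.sum_le_sum fun j _ =>
        (hFT j).tsum_norm_l2inner_shift_sq_le (by omega) hr_odd (hbound j) hf
    _ = p * (b₀ ^ 2 * n ^ 2 * l2normSq N r f) := by simp
    _ ≤ 2 ^ (p - 1) * (b₀ ^ 2 * n ^ 2 * l2normSq N r f) := by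
        have := l2normSq_nonneg f
        gcongr
        exact_mod_cast hp
    _ = 2 ^ (p - 1) * b₀ ^ 2 * n ^ 2 * l2normSq N r f := by ring

/-- Theorem 2.4 / thmM1: if each `F(f_j)` is a.e. bounded by `b₀` in
Frobenius norm on `Ω`, then the non-uniform shift system is a matrix-valued discrete Bessel
sequence with Bessel bound `2^(p-1) b₀² n²`. -/
theorem bessel_of_fourier_bounded
    (N r n p : ℕ) (hN : 1 ≤ N) (hr_odd : Odd r) (hr_cop : Nat.Coprime r N)
    (hr1 : 1 ≤ r) (hr2 : r ≤ 2 * N - 1)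
    (fs : Fin p → (LambdaSet N r → Mat n)) (hfs_mem : ∀ j, MemL2 N r (fs j))
    (hfs_ne : ∀ j, fs j ≠ 0)
    (b₀ : ℝ) (hb₀ : 0 < b₀)
    (Fs : Fin p → ℝ → Mat n) (hFT : ∀ j, IsFT N r (fs j) (Fs j))
    (hbound : ∀ j, ∀ᵐ x ∂(volume.restrict (OmegaSet N)), frobNorm (Fs j x) ≤ b₀) :
    ∀ f : LambdaSet N r → Mat n, MemL2 N r f →
      besselSum N r p fs f ≤ 2 ^ (p - 1) * b₀ ^ 2 * (n : ℝ) ^ 2 * l2normSq N r f :=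
  bessel_of_fourier_bounded_general N r n p hN hr_odd fs b₀ Fs hFT hbound
end

section
/- Let f_1, …, f_p ∈ ℓ²(Λ, M_n) and suppose the system {D_{2Nλ} f_j : λ ∈ Λ, 1 ≤ j ≤ p} is a matrix-valued discrete Bessel sequence of non-uniform shifts with Bessel bound b₀. Then for almost every x ∈ Ω and every j ∈ {1,…,p}, ∑_{m,k=1}^n |F(f_j)_{m,k}(x)|² ≤ 4 N b₀; equivalently ‖F(f_j)(x)‖_{M_n} ≤ 2√(N b₀). -/
open MeasureTheory Complex Real Classical

/-!
Write `g(x) = ∑ₘₖ |F(f_j)ₘₖ(x)|²`. Since `Ω` consists of two intervals of length `1/2` at distance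
`N/2` and `Λ = 2ℤ ∪ (r/N + 2ℤ)` with `r` odd, the exponentials `e^{2πiλx}`, `λ ∈ Λ`, form an
orthonormal basis of `L²(Ω)`. Hence for `E ⊆ Ω` the sequence `f` with Fourier transform
`1_E F(f_j)` has `‖f‖² = ∫_E g` and `⟨f, D_{2Nλ} f_j⟩ = ∫_E g(x) e^{-2πi 2Nλx} dx`. If `E` lies in
an interval `J ⊆ Ω` of length `1/(4N)`, the frequencies `2N·2ℤ = 4Nℤ` alone are an orthogonal
basis of `L²(J)`, so the Bessel inequality yields `(4N)⁻¹ ∫_E g² ≤ b₀ ∫_E g`. For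
`E = J ∩ {c ≤ g ≤ M}` with `c > 4N b₀` this forces `|E| = 0`, and `Ω` is covered by countably
many such intervals `J`.
-/

noncomputable section

open Set AddCircle ComplexConjugate
open scoped ENNReal

theorem hasSum_fourierCoeffOn_mul_conj {a b : ℝ} (hab : a < b) {f g : ℝ → ℂ}
    (hf : MemLp f 2 (volume.restrict (Ioc a b))) (hg : MemLp g 2 (volume.restrict (Ioc a b))) :
    HasSum (fun i => fourierCoeffOn hab f i * conj (fourierCoeffOn hab g i))
      ((b - a)⁻¹ • ∫ x in a..b, f x * conj (g x)) := by
  have := Fact.mk (by linarith : 0 < b - a)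
  have hb : a + (b - a) = b := add_sub_cancel a b
  have hF := (hb.symm ▸ hf : MemLp f 2 (volume.restrict (Ioc a (a + (b - a))))).memLp_liftIoc
    |>.haarAddCircle
  have hG := (hb.symm ▸ hg : MemLp g 2 (volume.restrict (Ioc a (a + (b - a))))).memLp_liftIoc
    |>.haarAddCircle
  have hcoeff : ∀ (w : ℝ → ℂ) (hW : MemLp (liftIoc (b - a) a w) 2 haarAddCircle) (i : ℤ),
      inner ℂ (fourierBasis i) hW.toLp = fourierCoeffOn hab w i := fun w hW i => by
    rw [← fourierBasis.repr_apply_apply, fourierBasis_repr, fourierCoeff_congr_ae hW.coeFn_toLp]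
    rfl
  have hinner : inner ℂ hG.toLp hF.toLp = (b - a)⁻¹ • ∫ x in a..b, f x * conj (g x) := by
    have hlift := integral_liftIoc_eq_intervalIntegral (T := b - a) (t := a)
      (f := fun x => f x * conj (g x))
    rw [hb] at hlift
    rw [L2.inner_def, ← hlift, ← integral_haarAddCircle]
    refine integral_congr_ae ?_
    filter_upwards [hF.coeFn_toLp, hG.coeFn_toLp] with x hFx hGx
    rw [hFx, hGx, RCLike.inner_apply]
    rfl
  have H := fourierBasis.hasSum_inner_mul_inner hG.toLp hF.toLp
  rw [hinner] at H
  simp only [← inner_conj_symm hG.toLp, hcoeff] at H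
  simpa only [mul_comm (conj _)] using H

def expNeg (t x : ℝ) : ℂ := Complex.exp (((-(2 * π * t * x) : ℝ) : ℂ) * Complex.I)

lemma norm_expNeg (t x : ℝ) : ‖expNeg t x‖ = 1 := Complex.norm_exp_ofReal_mul_I _

lemma expNeg_add_left (s t x : ℝ) : expNeg (s + t) x = expNeg s x * expNeg t x := by
  simp only [expNeg, ← Complex.exp_add]
  congr 1
  push_cast
  ring

lemma expNeg_add_right (t x y : ℝ) : expNeg t (x + y) = expNeg t x * expNeg t y := by
  simp only [expNeg, ← Complex.exp_add]
  congr 1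
  push_cast
  ring

lemma conj_expNeg (t x : ℝ) : conj (expNeg t x) = expNeg (-t) x := by
  simp only [expNeg, ← Complex.exp_conj, map_mul, Complex.conj_ofReal, Complex.conj_I]
  congr 1
  push_cast
  ring

lemma expNeg_mul_conj (t x : ℝ) : expNeg t x * conj (expNeg t x) = 1 := by
  rw [Complex.mul_conj, Complex.normSq_eq_norm_sq, norm_expNeg]
  norm_num

lemma continuous_expNeg (t : ℝ) : Continuous (expNeg t) := by
  unfold expNeg
  fun_prop

lemma MeasureTheory.MemLp.mul_expNeg {μ : Measure ℝ} {p : ℝ≥0∞} {w : ℝ → ℂ}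
    (hw : MemLp w p μ) (t : ℝ) : MemLp (fun x => w x * expNeg t x) p μ :=
  hw.of_le (hw.1.mul (continuous_expNeg t).aestronglyMeasurable)
    (.of_forall fun x => by rw [norm_mul, norm_expNeg, mul_one])

lemma MeasureTheory.MemLp.integrable_mul_conj {α : Type*} [MeasurableSpace α] {μ : Measure α}
    {f g : α → ℂ} (hf : MemLp f 2 μ) (hg : MemLp g 2 μ) :
    Integrable (fun x => f x * conj (g x)) μ :=
  hf.integrable_mul hg.star

/-- For `S = OmegaSet N` this is, definitionally, the inversion integral of `IsFT`. -/
def setFourierCoeff (S : Set ℝ) (w : ℝ → ℂ) (t : ℝ) : ℂ := ∫ x in S, w x * expNeg t x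

lemma setFourierCoeff_Ioc {a b : ℝ} (hab : a < b) (w : ℝ → ℂ) (n : ℤ) :
    setFourierCoeff (Ioc a b) w (n / (b - a)) = (b - a : ℝ) * fourierCoeffOn hab w n := by
  rw [fourierCoeffOn_eq_integral, intervalIntegral.integral_of_le hab.le, Complex.real_smul,
    ← mul_assoc, ← Complex.ofReal_mul, mul_one_div_cancel (sub_pos.2 hab).ne', Complex.ofReal_one,
    one_mul, setFourierCoeff]
  refine setIntegral_congr_fun measurableSet_Ioc fun x _ => ?_
  rw [fourier_coe_apply, smul_eq_mul, mul_comm, expNeg]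
  congr 2
  push_cast
  ring

lemma hasSum_setFourierCoeff_Ico_mul_conj {a b : ℝ} (hab : a < b) {u v : ℝ → ℂ}
    (hu : MemLp u 2 (volume.restrict (Ico a b))) (hv : MemLp v 2 (volume.restrict (Ico a b))) :
    HasSum (fun n : ℤ => setFourierCoeff (Ico a b) u (n / (b - a)) *
        conj (setFourierCoeff (Ico a b) v (n / (b - a))))
      ((b - a : ℝ) * ∫ x in Ico a b, u x * conj (v x)) := by
  have hIco : volume.restrict (Ico a b) = volume.restrict (Ioc a b) :=
    Measure.restrict_congr_set Ico_ae_eq_Ioc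
  have hcoeff : setFourierCoeff (Ico a b) = setFourierCoeff (Ioc a b) := by
    ext w t
    simp only [setFourierCoeff, hIco]
  rw [hIco] at hu hv ⊢
  simp only [hcoeff, setFourierCoeff_Ioc hab, map_mul, Complex.conj_ofReal]
  have hval : ((b - a : ℝ) : ℂ) ^ 2 * ((b - a)⁻¹ • ∫ x in a..b, u x * conj (v x)) =
      (b - a : ℝ) * ∫ x in Ioc a b, u x * conj (v x) := by
    rw [intervalIntegral.integral_of_le hab.le, Complex.real_smul, Complex.ofReal_inv]
    field_simp
  rw [← hval]
  exact ((hasSum_fourierCoeffOn_mul_conj hab hu hv).mul_left _).congr_fun fun n => by ring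

variable {N r : ℕ}

lemma add_two_mul_int_mem_lambdaSet {y : ℝ} (hy : y ∈ LambdaSet N r) (z : ℤ) :
    y + 2 * z ∈ LambdaSet N r := by
  obtain ⟨z', rfl | rfl⟩ := hy
  · exact ⟨z' + z, Or.inl (by push_cast; ring)⟩
  · exact ⟨z' + z, Or.inr (by push_cast; ring)⟩

lemma exists_two_mul_natCast_mul_eq (hN : N ≠ 0) {x : ℝ} (hx : x ∈ LambdaSet N r) :
    ∃ z : ℤ, 2 * N * x = 2 * z := by
  obtain ⟨z, rfl | rfl⟩ := hx
  · exact ⟨2 * N * z, by push_cast; ring⟩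
  · exact ⟨r + 2 * N * z, by push_cast; field_simp⟩

lemma two_mul_natCast_mul_mem_lambdaSet (hN : N ≠ 0) {x : ℝ} (hx : x ∈ LambdaSet N r) :
    2 * N * x ∈ LambdaSet N r := by
  obtain ⟨z, hz⟩ := exists_two_mul_natCast_mul_eq hN hx
  exact ⟨z, Or.inl hz⟩

lemma sub_two_mul_natCast_mul_mem_lambdaSet (hN : N ≠ 0) {x y : ℝ} (hx : x ∈ LambdaSet N r)
    (hy : y ∈ LambdaSet N r) : y - 2 * N * x ∈ LambdaSet N r := by
  obtain ⟨z, hz⟩ := exists_two_mul_natCast_mul_eq hN hx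
  simpa [hz, sub_eq_add_neg] using add_two_mul_int_mem_lambdaSet hy (-z)

def lambdaParam (N r : ℕ) : ℤ ⊕ ℤ → LambdaSet N r :=
  Sum.elim (fun z => ⟨2 * z, z, Or.inl rfl⟩) (fun z => ⟨r / N + 2 * z, z, Or.inr rfl⟩)

lemma lambdaParam_bijective (hN : N ≠ 0) (hr : Odd r) : (lambdaParam N r).Bijective := by
  have hne : ∀ z z' : ℤ, (2 * z : ℝ) ≠ r / N + 2 * z' := by
    intro z z' h
    have : (r : ℤ) = 2 * (N * (z - z')) := by
      have : (r : ℝ) = 2 * (N * (z - z')) := by field_simp at h; linarith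
      exact_mod_cast this
    exact Int.not_even_iff_odd.2 (Int.odd_coe_nat r |>.2 hr) ⟨_, this.trans (two_mul _)⟩
  refine ⟨?_, ?_⟩
  · rintro (z | z) (z' | z') h <;> replace h := congrArg Subtype.val h <;>
      simp only [lambdaParam, Sum.elim_inl, Sum.elim_inr] at h
    · exact congrArg Sum.inl (by exact_mod_cast (mul_right_inj' two_ne_zero).1 h)
    · exact (hne _ _ h).elim
    · exact (hne _ _ h.symm).elim
    · exact congrArg Sum.inr
        (by exact_mod_cast (mul_right_inj' two_ne_zero).1 (add_left_cancel h))
  · rintro ⟨x, z, rfl | rfl⟩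
    · exact ⟨.inl z, rfl⟩
    · exact ⟨.inr z, rfl⟩

lemma setFourierCoeff_mul_expNeg (S : Set ℝ) (w : ℝ → ℂ) (s t : ℝ) :
    setFourierCoeff S (fun x => w x * expNeg s x) t = setFourierCoeff S w (s + t) := by
  simp only [setFourierCoeff, expNeg_add_left, mul_assoc]

lemma measurePreserving_add_right_restrict_Ico (a b c : ℝ) :
    MeasurePreserving (· + c) (volume.restrict (Ico a b))
      (volume.restrict (Ico (a + c) (b + c))) := by
  have := (measurePreserving_add_right volume c).restrict_preimage
    (measurableSet_Ico (a := a + c) (b := b + c))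
  rwa [preimage_add_const_Ico, add_sub_cancel_right, add_sub_cancel_right] at this

lemma omegaSet_eq (N : ℕ) :
    OmegaSet N = Ico (0 : ℝ) (1 / 2) ∪ Ico (0 + (N : ℝ) / 2) (1 / 2 + N / 2) := by
  rw [OmegaSet, zero_add, add_div, add_comm (1 / 2 : ℝ)]

lemma measurableSet_omegaSet (N : ℕ) : MeasurableSet (OmegaSet N) :=
  measurableSet_Ico.union measurableSet_Ico

instance inst_s2 (N : ℕ) : IsFiniteMeasure (volume.restrict (OmegaSet N)) :=
  isFiniteMeasure_restrict.2
    ((Metric.isBounded_Ico _ _).union (Metric.isBounded_Ico _ _)).measure_lt_top.ne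

lemma MeasureTheory.MemLp.restrict_omegaSet {p : ℝ≥0∞} {w : ℝ → ℂ}
    (hw : MemLp w p (volume.restrict (OmegaSet N))) :
    MemLp w p (volume.restrict (Ico 0 (1 / 2))) ∧
      MemLp (fun x => w (x + N / 2)) p (volume.restrict (Ico 0 (1 / 2))) := by
  rw [omegaSet_eq] at hw
  exact ⟨hw.mono_measure (Measure.restrict_mono subset_union_left le_rfl),
    (hw.mono_measure (Measure.restrict_mono subset_union_right le_rfl)).comp_measurePreserving
      (measurePreserving_add_right_restrict_Ico _ _ _)⟩

lemma integral_omegaSet (hN : N ≠ 0) {w : ℝ → ℂ} (hw : IntegrableOn w (OmegaSet N)) :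
    ∫ x in OmegaSet N, w x = ∫ x in Ico 0 (1 / 2), (w x + w (x + N / 2)) := by
  obtain ⟨hw0, hw1⟩ := (memLp_one_iff_integrable.2 hw).restrict_omegaSet
  have hdisj : Disjoint (Ico (0 : ℝ) (1 / 2)) (Ico (0 + (N : ℝ) / 2) (1 / 2 + N / 2)) := by
    have : (1 : ℝ) ≤ N := by exact_mod_cast Nat.one_le_iff_ne_zero.2 hN
    rw [Ico_disjoint_Ico]
    exact (min_le_left _ _).trans (by linarith [le_max_right (0 : ℝ) (0 + N / 2)])
  rw [omegaSet_eq] at hw ⊢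
  rw [setIntegral_union hdisj measurableSet_Ico (hw.mono_set subset_union_left)
    (hw.mono_set subset_union_right), integral_add (memLp_one_iff_integrable.1 hw0)
    (memLp_one_iff_integrable.1 hw1),
    ← (measurePreserving_add_right_restrict_Ico _ _ _).integral_comp
      (measurableEmbedding_addRight _)]

lemma setFourierCoeff_omegaSet (hN : N ≠ 0) {w : ℝ → ℂ} (hw : IntegrableOn w (OmegaSet N))
    (t : ℝ) : setFourierCoeff (OmegaSet N) w t =
      setFourierCoeff (Ico 0 (1 / 2)) (fun x => w x + expNeg t (N / 2) * w (x + N / 2)) t := by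
  have hwt : IntegrableOn (fun x => w x * expNeg t x) (OmegaSet N) :=
    memLp_one_iff_integrable.1 ((memLp_one_iff_integrable.2 hw).mul_expNeg t)
  rw [setFourierCoeff, integral_omegaSet hN hwt]
  refine integral_congr_ae (.of_forall fun x => ?_)
  simp only [expNeg_add_right]
  ring

lemma expNeg_two_mul_intCast_half (z : ℤ) : expNeg (2 * z) (N / 2) = 1 := by
  rw [expNeg, ← Complex.exp_int_mul_two_pi_mul_I (-(z * N))]
  congr 1
  push_cast
  ring

lemma expNeg_div_add_two_mul_intCast_half (hN : N ≠ 0) (hr : Odd r) (z : ℤ) :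
    expNeg (r / N + 2 * z) (N / 2) = -1 := by
  obtain ⟨k, rfl⟩ := hr
  rw [expNeg, ← Complex.exp_pi_mul_I, ← mul_one (Complex.exp (π * I)),
    ← Complex.exp_int_mul_two_pi_mul_I (-(k + z * N + 1)), ← Complex.exp_add]
  congr 1
  push_cast
  field_simp
  ring

lemma integral_mul_conj_omegaSet (hN : N ≠ 0) {u v : ℝ → ℂ}
    (hu : MemLp u 2 (volume.restrict (OmegaSet N)))
    (hv : MemLp v 2 (volume.restrict (OmegaSet N))) (s : ℝ) :
    ∫ x in OmegaSet N, u x * conj (v x) =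
      ((1 / 2 : ℝ) : ℂ) * (∫ x in Ico 0 (1 / 2),
        (u x + u (x + N / 2)) * conj (v x + v (x + N / 2))) +
      ((1 / 2 : ℝ) : ℂ) * ∫ x in Ico 0 (1 / 2),
        (u x - u (x + N / 2)) * expNeg s x * conj ((v x - v (x + N / 2)) * expNeg s x) := by
  obtain ⟨hu0, hu1⟩ := hu.restrict_omegaSet
  obtain ⟨hv0, hv1⟩ := hv.restrict_omegaSet
  have hI₁ := (hu0.add hu1).integrable_mul_conj (hv0.add hv1)
  have hI₂ := ((hu0.sub hu1).mul_expNeg s).integrable_mul_conj ((hv0.sub hv1).mul_expNeg s)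
  simp only [Pi.add_apply, Pi.sub_apply] at hI₁ hI₂
  rw [integral_omegaSet hN (hu.integrable_mul_conj hv), ← mul_add, ← integral_add hI₁ hI₂,
    ← integral_const_mul]
  refine integral_congr_ae (.of_forall fun x => ?_)
  simp only [map_add, map_sub, map_mul]
  push_cast
  linear_combination (-(1 / 2) * (u x - u (x + N / 2)) * (conj (v x) - conj (v (x + N / 2)))) *
    expNeg_mul_conj s x

/-- Since `e^{-2πiλN/2} = ±1` for `λ ∈ 2ℤ`, resp. `λ ∈ r/N + 2ℤ`, the `Λ`-coefficients of `u` on `Ω`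
are the Fourier coefficients on `[0, 1/2)` of `u(x) + u(x + N/2)`, resp. of
`(u(x) - u(x + N/2)) e^{-2πi(r/N)x}`. -/
theorem hasSum_setFourierCoeff_omegaSet_mul_conj (hN : N ≠ 0) (hr : Odd r) {u v : ℝ → ℂ}
    (hu : MemLp u 2 (volume.restrict (OmegaSet N)))
    (hv : MemLp v 2 (volume.restrict (OmegaSet N))) :
    HasSum (fun lam : LambdaSet N r => setFourierCoeff (OmegaSet N) u lam *
        conj (setFourierCoeff (OmegaSet N) v lam))
      (∫ x in OmegaSet N, u x * conj (v x)) := by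
  rw [← (Equiv.ofBijective _ (lambdaParam_bijective hN hr)).hasSum_iff,
    integral_mul_conj_omegaSet hN hu hv (r / N)]
  obtain ⟨hu0, hu1⟩ := hu.restrict_omegaSet
  obtain ⟨hv0, hv1⟩ := hv.restrict_omegaSet
  have H₁ := hasSum_setFourierCoeff_Ico_mul_conj (by norm_num : (0 : ℝ) < 1 / 2)
    (hu0.add hu1) (hv0.add hv1)
  have H₂ := hasSum_setFourierCoeff_Ico_mul_conj (by norm_num : (0 : ℝ) < 1 / 2)
    ((hu0.sub hu1).mul_expNeg (r / N)) ((hv0.sub hv1).mul_expNeg (r / N))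
  have hfreq : ∀ z : ℤ, (z : ℝ) / (1 / 2) = 2 * z := fun z => by ring
  simp only [sub_zero, hfreq, setFourierCoeff_mul_expNeg, Pi.add_apply, Pi.sub_apply] at H₁ H₂
  have hu' := hu.integrable one_le_two
  have hv' := hv.integrable one_le_two
  refine HasSum.sum (H₁.congr_fun fun z => ?_) (H₂.congr_fun fun z => ?_)
  · simp only [Function.comp_apply, Equiv.ofBijective_apply, lambdaParam, Sum.elim_inl,
      setFourierCoeff_omegaSet hN hu', setFourierCoeff_omegaSet hN hv',
      expNeg_two_mul_intCast_half, one_mul]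
    rfl
  · simp only [Function.comp_apply, Equiv.ofBijective_apply, lambdaParam, Sum.elim_inr,
      setFourierCoeff_omegaSet hN hu', setFourierCoeff_omegaSet hN hv',
      expNeg_div_add_two_mul_intCast_half hN hr, neg_one_mul, ← sub_eq_add_neg]

lemma hasSum_norm_sq_of_hasSum_mul_conj {ι : Type*} {f : ι → ℂ} {a : ℝ}
    (h : HasSum (fun i => f i * conj (f i)) a) : HasSum (fun i => ‖f i‖ ^ 2) a := by
  simp only [Complex.mul_conj, Complex.normSq_eq_norm_sq] at h
  exact_mod_cast h

lemma integral_mul_conj_self {α : Type*} [MeasurableSpace α] (μ : Measure α) (u : α → ℂ) :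
    ∫ x, u x * conj (u x) ∂μ = ((∫ x, ‖u x‖ ^ 2 ∂μ : ℝ) : ℂ) := by
  simp only [Complex.mul_conj, Complex.normSq_eq_norm_sq]
  exact integral_ofReal

lemma hasSum_norm_sq_setFourierCoeff_Ico {a b : ℝ} (hab : a < b) {u : ℝ → ℂ}
    (hu : MemLp u 2 (volume.restrict (Ico a b))) :
    HasSum (fun n : ℤ => ‖setFourierCoeff (Ico a b) u (n / (b - a))‖ ^ 2)
      ((b - a) * ∫ x in Ico a b, ‖u x‖ ^ 2) := by
  have h := hasSum_setFourierCoeff_Ico_mul_conj hab hu hu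
  rw [integral_mul_conj_self, ← Complex.ofReal_mul] at h
  exact hasSum_norm_sq_of_hasSum_mul_conj h

lemma hasSum_norm_sq_setFourierCoeff_omegaSet (hN : N ≠ 0) (hr : Odd r) {u : ℝ → ℂ}
    (hu : MemLp u 2 (volume.restrict (OmegaSet N))) :
    HasSum (fun lam : LambdaSet N r => ‖setFourierCoeff (OmegaSet N) u lam‖ ^ 2)
      (∫ x in OmegaSet N, ‖u x‖ ^ 2) := by
  have h := hasSum_setFourierCoeff_omegaSet_mul_conj (r := r) hN hr hu hu
  rw [integral_mul_conj_self] at h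
  exact hasSum_norm_sq_of_hasSum_mul_conj h

def frobSq {n : ℕ} (A : Mat n) : ℝ := ∑ m, ∑ k, ‖A m k‖ ^ 2

lemma frobSq_nonneg {n : ℕ} (A : Mat n) : 0 ≤ frobSq A := by
  unfold frobSq
  positivity

lemma measurable_frobSq {n : ℕ} {G : ℝ → Mat n} (hG : ∀ m k, Measurable fun x => G x m k) :
    Measurable fun x => frobSq (G x) :=
  Finset.measurable_sum _ fun m _ => Finset.measurable_sum _ fun k _ => (hG m k).norm.pow_const 2

/-- The sequence on `Λ` whose Fourier transform, in the sense of `IsFT`, is `G`. -/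
def matCoeffs (N r : ℕ) {n : ℕ} (G : ℝ → Mat n) : LambdaSet N r → Mat n :=
  fun lam => Matrix.of fun m k => setFourierCoeff (OmegaSet N) (fun x => G x m k) lam

section MatCoeffs

variable {n : ℕ} {G H : ℝ → Mat n}

lemma l2inner_matCoeffs (hN : N ≠ 0) (hr : Odd r)
    (hG : ∀ m k, MemLp (fun x => G x m k) 2 (volume.restrict (OmegaSet N)))
    (hH : ∀ m k, MemLp (fun x => H x m k) 2 (volume.restrict (OmegaSet N))) :
    l2inner N r (matCoeffs N r G) (matCoeffs N r H) =
      ∫ x in OmegaSet N, ∑ m, ∑ k, G x m k * conj (H x m k) := by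
  have h := hasSum_sum (s := .univ) fun m _ => hasSum_sum (s := .univ) fun k _ =>
    hasSum_setFourierCoeff_omegaSet_mul_conj (r := r) hN hr (hG m k) (hH m k)
  rw [integral_finsetSum _ fun m _ => integrable_finsetSum _ fun k _ =>
    (hG m k).integrable_mul_conj (hH m k)]
  simp only [← integral_finsetSum _ fun k _ => (hG _ k).integrable_mul_conj (hH _ k)] at h
  exact h.tsum_eq

lemma hasSum_frobSq_matCoeffs (hN : N ≠ 0) (hr : Odd r)
    (hG : ∀ m k, MemLp (fun x => G x m k) 2 (volume.restrict (OmegaSet N))) :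
    HasSum (fun lam => frobSq (matCoeffs N r G lam)) (∫ x in OmegaSet N, frobSq (G x)) := by
  have h := hasSum_sum (s := .univ) fun m _ => hasSum_sum (s := .univ) fun k _ =>
    hasSum_norm_sq_setFourierCoeff_omegaSet (r := r) hN hr (hG m k)
  have hI : ∀ m k, Integrable (fun x => ‖G x m k‖ ^ 2) (volume.restrict (OmegaSet N)) :=
    fun m k => (hG m k).integrable_norm_pow two_ne_zero
  simp only [← integral_finsetSum _ fun k _ => hI _ k,
    ← integral_finsetSum _ fun m _ => integrable_finsetSum _ fun k _ => hI m k] at h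
  exact h

lemma shift_matCoeffs (hN : N ≠ 0) (lam : LambdaSet N r) (G : ℝ → Mat n) :
    shift N r lam (matCoeffs N r G) =
      matCoeffs N r (fun x => expNeg (-(2 * N * lam)) x • G x) := by
  funext lam'
  rw [shift, dif_pos (sub_two_mul_natCast_mul_mem_lambdaSet hN lam.2 lam'.2)]
  ext m k
  simp only [matCoeffs, Matrix.of_apply, Matrix.smul_apply, smul_eq_mul, mul_comm (expNeg _ _),
    setFourierCoeff_mul_expNeg, sub_eq_neg_add]

end MatCoeffs

lemma eq_zero_of_integral_sq_le {α : Type*} [MeasurableSpace α] {μ : Measure α}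
    [IsFiniteMeasure μ] {g : α → ℝ} {c M K : ℝ} (hg : AEStronglyMeasurable g μ)
    (hbd : ∀ᵐ x ∂μ, c ≤ g x ∧ g x ≤ M) (hK : 0 ≤ K) (hKc : K < c)
    (h : ∫ x, g x ^ 2 ∂μ ≤ K * ∫ x, g x ∂μ) : μ = 0 := by
  have hc : 0 < c := hK.trans_lt hKc
  have hgi : Integrable g μ := .of_bound hg M <| hbd.mono fun x hx => by
    rw [Real.norm_eq_abs, abs_of_pos (hc.trans_le hx.1)]
    exact hx.2
  have hg2i : Integrable (fun x => g x ^ 2) μ := .of_bound (hg.pow 2) (M ^ 2) <| hbd.mono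
    fun x hx => by
      rw [Real.norm_eq_abs, abs_of_pos (by nlinarith [hx.1])]
      nlinarith [hx.1, hx.2]
  have hsq : c * ∫ x, g x ∂μ ≤ ∫ x, g x ^ 2 ∂μ := by
    rw [← integral_const_mul]
    exact integral_mono_ae (hgi.const_mul c) hg2i (hbd.mono fun x hx => by nlinarith [hx.1])
  have hlow : c * μ.real univ ≤ ∫ x, g x ∂μ := by
    simpa [mul_comm] using integral_mono_ae (integrable_const c) hgi (hbd.mono fun x hx => hx.1)
  have hint : ∫ x, g x ∂μ ≤ 0 := by
    by_contra! hpos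
    nlinarith [mul_lt_mul_of_pos_right hKc hpos]
  have hμ : μ.real univ = 0 :=
    le_antisymm (le_of_mul_le_mul_left (by linarith : c * μ.real univ ≤ c * 0) hc)
      measureReal_nonneg
  rwa [measureReal_eq_zero_iff, Measure.measure_univ_eq_zero] at hμ

lemma ae_le_of_forall_measure_preimage_Icc_eq_zero {α : Type*} [MeasurableSpace α]
    {μ : Measure α} {g : α → ℝ} {B : ℝ} (h : ∀ c, B < c → ∀ M, μ (g ⁻¹' Icc c M) = 0) :
    ∀ᵐ x ∂μ, g x ≤ B := by
  have hnull : ∀ q M : ℕ, ∀ᵐ x ∂μ, g x ∉ Icc (B + 1 / (q + 1)) M := fun q M =>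
    measure_eq_zero_iff_ae_notMem.1 (h _ (lt_add_of_pos_right B (by positivity)) M)
  filter_upwards [ae_all_iff.2 fun q => ae_all_iff.2 (hnull q)] with x hx
  by_contra! hlt
  obtain ⟨q, hq⟩ := exists_nat_one_div_lt (sub_pos.2 hlt)
  exact hx q ⌈g x⌉₊ ⟨by linarith, Nat.le_ceil _⟩

lemma exists_Ico_intCast_mul_subset {t : ℝ} (ht : 0 < t) {a b : ℤ} {x : ℝ}
    (hx : x ∈ Ico (a * t) (b * t)) :
    ∃ k : ℤ, x ∈ Ico (k * t) (k * t + t) ∧ Ico (k * t) (k * t + t) ⊆ Ico (a * t) (b * t) := by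
  refine ⟨⌊x / t⌋, ⟨?_, ?_⟩, Ico_subset_Ico ?_ ?_⟩
  · exact (le_div_iff₀ ht).1 (Int.floor_le _)
  · have := Int.lt_floor_add_one (x / t)
    rw [div_lt_iff₀ ht] at this
    linarith
  · exact mul_le_mul_of_nonneg_right (by exact_mod_cast Int.le_floor.2 ((le_div_iff₀ ht).2 hx.1))
      ht.le
  · have : ⌊x / t⌋ + 1 ≤ b := Int.floor_lt.2 ((div_lt_iff₀ ht).2 hx.2)
    have : (⌊x / t⌋ + 1 : ℝ) ≤ b := by exact_mod_cast this
    nlinarith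

lemma ae_restrict_omegaSet_of_forall_Ico (hN : N ≠ 0) {P : ℝ → Prop}
    (h : ∀ a, Ico a (a + (4 * (N : ℝ))⁻¹) ⊆ OmegaSet N →
      ∀ᵐ x ∂volume.restrict (Ico a (a + (4 * (N : ℝ))⁻¹)), P x) :
    ∀ᵐ x ∂volume.restrict (OmegaSet N), P x := by
  set t : ℝ := (4 * N)⁻¹
  have ht : 0 < t := by positivity
  set S := {k : ℤ | Ico (k * t) (k * t + t) ⊆ OmegaSet N}
  have hΩ : OmegaSet N = Ico ((0 : ℤ) * t) ((2 * N : ℤ) * t) ∪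
      Ico ((2 * N ^ 2 : ℤ) * t) ((2 * N ^ 2 + 2 * N : ℤ) * t) := by
    have : (N : ℝ) ≠ 0 := by exact_mod_cast hN
    rw [OmegaSet]
    congr 2 <;> push_cast <;> simp only [t] <;> field_simp <;> ring
  have hcover : OmegaSet N ⊆ ⋃ k ∈ S, Ico (k * t) (k * t + t) := by
    have hpiece : ∀ a b : ℤ, Ico (a * t) (b * t) ⊆ OmegaSet N →
        Ico (a * t) (b * t) ⊆ ⋃ k ∈ S, Ico (k * t) (k * t + t) := fun a b hab x hx => by
      obtain ⟨k, hxk, hk⟩ := exists_Ico_intCast_mul_subset ht hx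
      exact mem_biUnion (hk.trans hab) hxk
    rw [hΩ]
    exact union_subset (hpiece _ _ (hΩ ▸ subset_union_left))
      (hpiece _ _ (hΩ ▸ subset_union_right))
  exact ae_restrict_of_ae_restrict_of_subset hcover
    ((ae_restrict_biUnion_iff _ S.to_countable _).2 fun k hk => h _ hk)

lemma exists_measurable_ae_eq_matrix {α ι κ : Type*} [MeasurableSpace α] [Countable ι]
    [Countable κ] {μ : Measure α} {F : α → Matrix ι κ ℂ}
    (hF : ∀ m k, AEStronglyMeasurable (fun x => F x m k) μ) :
    ∃ G : α → Matrix ι κ ℂ, (∀ m k, Measurable fun x => G x m k) ∧ ∀ᵐ x ∂μ, G x = F x := by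
  refine ⟨fun x => Matrix.of fun m k => (hF m k).mk _ x,
    fun m k => (hF m k).stronglyMeasurable_mk.measurable, ?_⟩
  filter_upwards [ae_all_iff.2 fun m => ae_all_iff.2 fun k => (hF m k).ae_eq_mk] with x hx
  ext m k
  exact (hx m k).symm

lemma setIntegral_indicator_of_subset {E S : Set ℝ} (hE : MeasurableSet E) (hES : E ⊆ S)
    {F : Type*} [NormedAddCommGroup F] [NormedSpace ℝ F] (f : ℝ → F) :
    ∫ x in S, E.indicator f x = ∫ x in E, f x := by
  rw [setIntegral_indicator hE, inter_eq_self_of_subset_right hES]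

/-- The frequencies `2N · 2ℤ ⊆ 2N · Λ` are the Fourier frequencies of an interval of length
`1/(4N)`. -/
lemma integral_norm_sq_le_tsum_setFourierCoeff (hN : N ≠ 0) (hr : Odd r) {a : ℝ}
    (hJ : Ico a (a + (4 * (N : ℝ))⁻¹) ⊆ OmegaSet N) {w : ℝ → ℂ}
    (hw : MemLp w 2 (volume.restrict (OmegaSet N)))
    (hsupp : ∀ x ∉ Ico a (a + (4 * (N : ℝ))⁻¹), w x = 0) :
    (4 * (N : ℝ))⁻¹ * ∫ x in Ico a (a + (4 * (N : ℝ))⁻¹), ‖w x‖ ^ 2 ≤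
      ∑' lam : LambdaSet N r, ‖setFourierCoeff (OmegaSet N) w (2 * N * lam)‖ ^ 2 := by
  have hN' : (N : ℝ) ≠ 0 := by exact_mod_cast hN
  have hcirc := hasSum_norm_sq_setFourierCoeff_Ico (lt_add_of_pos_right a (by positivity))
    (hw.mono_measure (Measure.restrict_mono hJ le_rfl))
  rw [add_sub_cancel_left] at hcirc
  have hcoeff : ∀ z : ℤ, setFourierCoeff (Ico a (a + (4 * (N : ℝ))⁻¹)) w (z / (4 * (N : ℝ))⁻¹) =
      setFourierCoeff (OmegaSet N) w (2 * N * lambdaParam N r (.inl z)) := fun z => by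
    have hfreq : (z : ℝ) / (4 * (N : ℝ))⁻¹ = 2 * N * (2 * z) := by
      field_simp
      ring
    rw [hfreq, setFourierCoeff, setFourierCoeff, setIntegral_eq_of_subset_of_forall_sdiff_eq_zero
      (measurableSet_omegaSet N) hJ fun x hx => by rw [hsupp x hx.2, zero_mul]]
    rfl
  have hscale : Function.Injective fun lam : LambdaSet N r =>
      (⟨2 * N * lam, two_mul_natCast_mul_mem_lambdaSet hN lam.2⟩ : LambdaSet N r) :=
    fun lam lam' h => Subtype.ext (mul_left_cancel₀ (by positivity) (congrArg Subtype.val h))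
  have hsum := (hasSum_norm_sq_setFourierCoeff_omegaSet hN hr hw).summable.comp_injective hscale
  rw [← hcirc.tsum_eq]
  simp only [hcoeff]
  exact tsum_comp_le_tsum_of_inj hsum (fun _ => sq_nonneg _)
    ((lambdaParam_bijective hN hr).1.comp Sum.inl_injective)

section TestFunction

variable {n : ℕ} {G : ℝ → Mat n} {E : Set ℝ}

lemma indicator_matrix_apply (E : Set ℝ) (G : ℝ → Mat n) (x : ℝ) (m k : Fin n) :
    E.indicator G x m k = E.indicator (fun y => G y m k) x := by
  by_cases hx : x ∈ E <;> simp [hx]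

lemma memLp_indicator_entry {μ : Measure ℝ} {p : ℝ≥0∞}
    (hG : ∀ m k, MemLp (fun x => G x m k) p μ) (hE : MeasurableSet E) (m k : Fin n) :
    MemLp (fun x => E.indicator G x m k) p μ := by
  simpa only [indicator_matrix_apply] using (hG m k).indicator hE

lemma frobSq_indicator (E : Set ℝ) (G : ℝ → Mat n) (x : ℝ) :
    frobSq (E.indicator G x) = E.indicator (fun y => frobSq (G y)) x := by
  by_cases hx : x ∈ E <;> simp [hx, frobSq]

lemma l2inner_matCoeffs_indicator_shift (hN : N ≠ 0) (hr : Odd r)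
    (hG : ∀ m k, MemLp (fun x => G x m k) 2 (volume.restrict (OmegaSet N)))
    (hE : MeasurableSet E) (lam : LambdaSet N r) :
    l2inner N r (matCoeffs N r (E.indicator G)) (shift N r lam (matCoeffs N r G)) =
      setFourierCoeff (OmegaSet N) (E.indicator fun x => (frobSq (G x) : ℂ)) (2 * N * lam) := by
  have hGe : ∀ m k, MemLp (fun x => (expNeg (-(2 * N * lam)) x • G x) m k) 2
      (volume.restrict (OmegaSet N)) := fun m k =>
    ((hG m k).mul_expNeg _).ae_eq (.of_forall fun x => mul_comm _ _)
  rw [shift_matCoeffs hN, l2inner_matCoeffs hN hr (memLp_indicator_entry hG hE) hGe,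
    setFourierCoeff]
  refine integral_congr_ae (.of_forall fun x => ?_)
  by_cases hx : x ∈ E
  · simp only [indicator_of_mem hx, Matrix.smul_apply, smul_eq_mul, map_mul, conj_expNeg, neg_neg,
      frobSq, Complex.ofReal_sum, Complex.ofReal_pow, Finset.sum_mul]
    refine Finset.sum_congr rfl fun m _ => Finset.sum_congr rfl fun k _ => ?_
    rw [mul_left_comm, Complex.mul_conj, Complex.normSq_eq_norm_sq, mul_comm]
    push_cast
    ring
  · simp [indicator_of_notMem hx]

end TestFunction

section Bessel

variable {n p : ℕ} {fs : Fin p → LambdaSet N r → Mat n} {b₀ : ℝ} {j : Fin p} {G : ℝ → Mat n}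

theorem setIntegral_frobSq_sq_le_of_bessel (hN : N ≠ 0) (hr : Odd r)
    (hbessel : ∀ f : LambdaSet N r → Mat n, MemL2 N r f →
      besselSum N r p fs f ≤ b₀ * l2normSq N r f)
    (hGm : ∀ m k, Measurable fun x => G x m k)
    (hG : ∀ m k, MemLp (fun x => G x m k) 2 (volume.restrict (OmegaSet N)))
    (hfj : fs j = matCoeffs N r G) {a : ℝ} (hJ : Ico a (a + (4 * (N : ℝ))⁻¹) ⊆ OmegaSet N)
    {E : Set ℝ} (hE : MeasurableSet E) (hEJ : E ⊆ Ico a (a + (4 * (N : ℝ))⁻¹)) {M : ℝ}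
    (hM : ∀ x ∈ E, frobSq (G x) ≤ M) :
    ∫ x in E, frobSq (G x) ^ 2 ≤ 4 * N * b₀ * ∫ x in E, frobSq (G x) := by
  have hg := measurable_frobSq hGm
  set w : ℝ → ℂ := E.indicator fun x => (frobSq (G x) : ℂ)
  have hw : MemLp w 2 (volume.restrict (OmegaSet N)) :=
    .of_bound ((Complex.measurable_ofReal.comp hg).indicator hE).aestronglyMeasurable (max M 0)
      (.of_forall fun x => by
        by_cases hx : x ∈ E
        · simpa [w, hx, abs_of_nonneg (frobSq_nonneg _)] using le_max_of_le_left (hM x hx)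
        · simp [w, hx])
  have hlow := integral_norm_sq_le_tsum_setFourierCoeff (r := r) hN hr hJ hw
    fun x hx => indicator_of_notMem (fun h => hx (hEJ h)) _
  have hsqJ : ∫ x in Ico a (a + (4 * (N : ℝ))⁻¹), ‖w x‖ ^ 2 = ∫ x in E, frobSq (G x) ^ 2 := by
    rw [← setIntegral_indicator_of_subset hE hEJ]
    congr 1
    ext x
    by_cases hx : x ∈ E <;> simp [w, hx]
  have hnorm := hasSum_frobSq_matCoeffs hN hr (memLp_indicator_entry hG hE)
  have hnormΩ : ∫ x in OmegaSet N, frobSq (E.indicator G x) = ∫ x in E, frobSq (G x) := by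
    simp only [frobSq_indicator]
    exact setIntegral_indicator_of_subset hE (hEJ.trans hJ) _
  have hbes := hbessel _ hnorm.summable
  rw [show l2normSq N r _ = _ from hnorm.tsum_eq, hnormΩ] at hbes
  have hj : ∑' lam : LambdaSet N r, ‖setFourierCoeff (OmegaSet N) w (2 * N * lam)‖ ^ 2 ≤
      besselSum N r p fs (matCoeffs N r (E.indicator G)) := by
    refine le_of_eq_of_le ?_ (Finset.single_le_sum (fun j' _ => tsum_nonneg fun _ => sq_nonneg _)
      (Finset.mem_univ j))
    simp only [hfj, l2inner_matCoeffs_indicator_shift hN hr hG hE]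
    rfl
  have h4N : (0 : ℝ) < 4 * N := by positivity
  rw [hsqJ] at hlow
  calc ∫ x in E, frobSq (G x) ^ 2 = 4 * N * ((4 * (N : ℝ))⁻¹ * ∫ x in E, frobSq (G x) ^ 2) := by
        field_simp
    _ ≤ 4 * N * (b₀ * ∫ x in E, frobSq (G x)) :=
        mul_le_mul_of_nonneg_left (hlow.trans (hj.trans hbes)) h4N.le
    _ = 4 * N * b₀ * ∫ x in E, frobSq (G x) := by ring

theorem ae_frobSq_le_of_bessel (hN : N ≠ 0) (hr : Odd r) (hb₀ : 0 ≤ b₀)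
    (hbessel : ∀ f : LambdaSet N r → Mat n, MemL2 N r f →
      besselSum N r p fs f ≤ b₀ * l2normSq N r f)
    (hGm : ∀ m k, Measurable fun x => G x m k)
    (hG : ∀ m k, MemLp (fun x => G x m k) 2 (volume.restrict (OmegaSet N)))
    (hfj : fs j = matCoeffs N r G) {a : ℝ} (hJ : Ico a (a + (4 * (N : ℝ))⁻¹) ⊆ OmegaSet N) :
    ∀ᵐ x ∂volume.restrict (Ico a (a + (4 * (N : ℝ))⁻¹)), frobSq (G x) ≤ 4 * N * b₀ := by
  have hg := measurable_frobSq hGm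
  refine ae_le_of_forall_measure_preimage_Icc_eq_zero fun c hc M => ?_
  set E := (fun x => frobSq (G x)) ⁻¹' Icc c M ∩ Ico a (a + (4 * (N : ℝ))⁻¹)
  have hE : MeasurableSet E := (hg measurableSet_Icc).inter measurableSet_Ico
  have hEJ : E ⊆ Ico a (a + (4 * (N : ℝ))⁻¹) := inter_subset_right
  have : IsFiniteMeasure (volume.restrict E) :=
    isFiniteMeasure_restrict.2 ((measure_mono hEJ).trans_lt measure_Ico_lt_top).ne
  rw [Measure.restrict_apply (hg measurableSet_Icc), ← Measure.restrict_eq_zero]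
  exact eq_zero_of_integral_sq_le hg.aestronglyMeasurable
    (ae_restrict_of_forall_mem hE fun x hx => hx.1) (by positivity) hc
    (setIntegral_frobSq_sq_le_of_bessel hN hr hbessel hGm hG hfj hJ hE hEJ fun x hx => hx.1.2)

end Bessel

end

theorem fourier_sq_bound_of_bessel_general
    (N r n p : ℕ) (hN : 1 ≤ N) (hr_odd : Odd r)
    (fs : Fin p → (LambdaSet N r → Mat n))
    (b₀ : ℝ) (hb₀ : 0 < b₀)
    (hbessel : ∀ f : LambdaSet N r → Mat n, MemL2 N r f →
      besselSum N r p fs f ≤ b₀ * l2normSq N r f) :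
    ∀ (j : Fin p) (F : ℝ → Mat n), IsFT N r (fs j) F →
      ∀ᵐ x ∂(volume.restrict (OmegaSet N)),
        (∑ m, ∑ k, ‖F x m k‖ ^ 2) ≤ 4 * (N : ℝ) * b₀ ∧
        frobNorm (F x) ≤ 2 * Real.sqrt ((N : ℝ) * b₀) := by
  intro j F ⟨hF, hinv⟩
  have hN₀ : N ≠ 0 := Nat.one_le_iff_ne_zero.1 hN
  obtain ⟨G, hGm, hGF⟩ := exists_measurable_ae_eq_matrix fun m k => (hF m k).1
  have hG : ∀ m k, MemLp (fun x => G x m k) 2 (volume.restrict (OmegaSet N)) := fun m k =>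
    (hF m k).ae_eq (hGF.mono fun x hx => congrArg (fun A : Mat n => A m k) hx.symm)
  have hfj : fs j = matCoeffs N r G := by
    funext lam
    ext m k
    exact (hinv lam m k).trans (integral_congr_ae (hGF.mono fun x hx =>
      congrArg (fun A : Mat n => A m k * expNeg lam x) hx.symm))
  have hbound := ae_restrict_omegaSet_of_forall_Ico hN₀ fun _ hJ =>
    ae_frobSq_le_of_bessel hN₀ hr_odd hb₀.le hbessel hGm hG hfj hJ
  filter_upwards [hbound, hGF] with x hx hGx
  rw [← hGx]
  refine ⟨hx, ?_⟩
  calc frobNorm (G x) = √(frobSq (G x)) := rfl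
    _ ≤ √(2 ^ 2 * (N * b₀)) := Real.sqrt_le_sqrt (by linarith)
    _ = 2 * √(N * b₀) := by rw [Real.sqrt_mul (by positivity), Real.sqrt_sq zero_le_two]

/-- if the non-uniform shift system is a matrix-valued discrete Bessel
sequence with Bessel bound `b₀`, then a.e. on `Ω` one has
`∑_{m,k} |F(f_j)_{m,k}(x)|² ≤ 4 N b₀`, equivalently `‖F(f_j)(x)‖ ≤ 2 √(N b₀)`. -/
theorem fourier_sq_bound_of_bessel
    (N r n p : ℕ) (hN : 1 ≤ N) (hr_odd : Odd r) (hr_cop : Nat.Coprime r N)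
    (hr1 : 1 ≤ r) (hr2 : r ≤ 2 * N - 1)
    (fs : Fin p → (LambdaSet N r → Mat n)) (hfs_mem : ∀ j, MemL2 N r (fs j))
    (b₀ : ℝ) (hb₀ : 0 < b₀)
    (hbessel : ∀ f : LambdaSet N r → Mat n, MemL2 N r f →
      besselSum N r p fs f ≤ b₀ * l2normSq N r f) :
    ∀ (j : Fin p) (F : ℝ → Mat n), IsFT N r (fs j) F →
      ∀ᵐ x ∂(volume.restrict (OmegaSet N)),
        (∑ m, ∑ k, ‖F x m k‖ ^ 2) ≤ 4 * (N : ℝ) * b₀ ∧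
        frobNorm (F x) ≤ 2 * Real.sqrt ((N : ℝ) * b₀) :=
  fourier_sq_bound_of_bessel_general N r n p hN hr_odd fs b₀ hb₀ hbessel
end
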